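/- arXiv:2207.14787 — 6 statements merged into one kernel-verified Lean document; each statement's English description precedes it below -/
import Mathlib

section
/- For all integers 0 ≤ k ≤ m, the central-style binomial inequality C(2m, 2k) ≤ 2^m · C(m, k) holds. -/
/-!
Since `(2n)! = 2ⁿ n! (2n-1)‼`, the quotient `C(2m, 2k) / C(m, k)` equals
`(2m-1)‼ / ((2k-1)‼ (2(m-k)-1)‼)`, so with `a = k`, `b = m - k` the claim becomes
`(2(a+b)-1)‼ ≤ 2^(a+b) (2a-1)‼ (2b-1)‼`. Raising the larger index `b` by one multiplies the left
side by `2(a+b)+1` and the right side by `2(2b+1)`, which is no smaller. On the diagonal one raises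
both indices at once: the factors are `(4a+3)(4a+1)` and `4(2a+1)²`.
-/

open Nat

namespace Nat

theorem doubleFactorial_two_mul_add_one_sub_one (n : ℕ) :
    (2 * (n + 1) - 1)‼ = (2 * n + 1) * (2 * n - 1)‼ := by
  rw [show 2 * (n + 1) - 1 = 2 * n + 1 by omega, doubleFactorial_add_one]

theorem factorial_two_mul_eq_mul_doubleFactorial (n : ℕ) :
    (2 * n)! = 2 ^ n * n ! * (2 * n - 1)‼ := by
  cases n with
  | zero => rfl
  | succ n =>
    rw [← doubleFactorial_two_mul, show 2 * (n + 1) = 2 * n + 1 + 1 by ring,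
      factorial_eq_mul_doubleFactorial, Nat.add_sub_cancel]

theorem choose_two_mul_mul_doubleFactorial (a b : ℕ) :
    (2 * (a + b)).choose (2 * a) * ((2 * a - 1)‼ * (2 * b - 1)‼) =
      (a + b).choose a * (2 * (a + b) - 1)‼ := by
  refine Nat.eq_of_mul_eq_mul_right (by positivity : 0 < 2 ^ (a + b) * (a ! * b !)) ?_
  have hdouble := add_choose_mul_factorial_mul_factorial (2 * b) (2 * a)
  have hsingle := add_choose_mul_factorial_mul_factorial b a
  rw [add_comm (2 * b), ← mul_add, factorial_two_mul_eq_mul_doubleFactorial,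
    factorial_two_mul_eq_mul_doubleFactorial, factorial_two_mul_eq_mul_doubleFactorial] at hdouble
  rw [add_comm b] at hsingle
  calc _ = (2 * (a + b)).choose (2 * a) * (2 ^ b * b ! * (2 * b - 1)‼)
          * (2 ^ a * a ! * (2 * a - 1)‼) := by ring
    _ = 2 ^ (a + b) * (a + b)! * (2 * (a + b) - 1)‼ := hdouble
    _ = _ := by rw [← hsingle]; ring

theorem doubleFactorial_two_mul_add_self_le (a : ℕ) :
    (2 * (a + a) - 1)‼ ≤ 2 ^ (a + a) * ((2 * a - 1)‼ * (2 * a - 1)‼) := by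
  induction a with
  | zero => rfl
  | succ a ih =>
    rw [show a + 1 + (a + 1) = a + a + 1 + 1 by ring, doubleFactorial_two_mul_add_one_sub_one,
      doubleFactorial_two_mul_add_one_sub_one, doubleFactorial_two_mul_add_one_sub_one,
      pow_succ, pow_succ]
    set D := 2 ^ (a + a) * ((2 * a - 1)‼ * (2 * a - 1)‼)
    calc (2 * (a + a + 1) + 1) * ((2 * (a + a) + 1) * (2 * (a + a) - 1)‼)
        ≤ (2 * (a + a + 1) + 1) * ((2 * (a + a) + 1) * D) := by gcongr
      _ = (2 * (a + a + 1) + 1) * (2 * (a + a) + 1) * D := by ring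
      _ ≤ 2 * 2 * ((2 * a + 1) * (2 * a + 1)) * D := Nat.mul_le_mul_right _ (by nlinarith)
      _ = _ := by ring

theorem doubleFactorial_two_mul_add_le (a b : ℕ) :
    (2 * (a + b) - 1)‼ ≤ 2 ^ (a + b) * ((2 * a - 1)‼ * (2 * b - 1)‼) := by
  wlog hab : a ≤ b generalizing a b
  · rw [add_comm a b, mul_comm (2 * a - 1)‼]
    exact this b a (by omega)
  induction b, hab using Nat.le_induction with
  | base => exact doubleFactorial_two_mul_add_self_le a
  | succ b hab ih =>
    rw [← add_assoc, doubleFactorial_two_mul_add_one_sub_one,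
      doubleFactorial_two_mul_add_one_sub_one, pow_succ]
    set D := 2 ^ (a + b) * ((2 * a - 1)‼ * (2 * b - 1)‼)
    calc (2 * (a + b) + 1) * (2 * (a + b) - 1)‼
        ≤ (2 * (a + b) + 1) * D := by gcongr
      _ ≤ 2 * (2 * b + 1) * D := by gcongr; omega
      _ = _ := by ring

end Nat

theorem stmt_0 (m k : ℕ) (hk : k ≤ m) :
    Nat.choose (2 * m) (2 * k) ≤ 2 ^ m * Nat.choose m k := by
  obtain ⟨b, rfl⟩ := Nat.exists_eq_add_of_le hk
  refine Nat.le_of_mul_le_mul_right ?_ (by positivity : 0 < (2 * k - 1)‼ * (2 * b - 1)‼)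
  calc _ = (k + b).choose k * (2 * (k + b) - 1)‼ := choose_two_mul_mul_doubleFactorial k b
    _ ≤ (k + b).choose k * (2 ^ (k + b) * ((2 * k - 1)‼ * (2 * b - 1)‼)) := by
        gcongr; exact doubleFactorial_two_mul_add_le k b
    _ = _ := by ring
end

section
/- For all integers 0 ≤ y ≤ x ≤ n and 0 ≤ k+y ≤ n+x, the ratio C(n+x, k+y) / C(2(n+x), 2(k+y)) is at most C(n, k) / C(2n, 2k). In other words, the function (n,k) ↦ C(n,k)/C(2n,2k) is monotonically non-increasing when n and k are simultaneously increased by x and y respectively with y ≤ x. -/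
/-!
Writing `n = a + b` and `k = a`, the ratio `C(a+b, a) / C(2a+2b, 2a)` equals
`(a+b)! (2a)! (2b)! / (a! b! (2a+2b)!)`, which is symmetric in `a` and `b`, and increasing `b`
by one multiplies it by `(2b+1)/(2a+2b+1) ≤ 1`. Hence it is antitone in both `a` and `b`;
the theorem raises `a` by `y` and `b` by `x - y`.
-/

open Nat

noncomputable def chooseRatio (a b : ℕ) : ℝ :=
  ((a + b).choose a : ℝ) / ((2 * (a + b)).choose (2 * a) : ℝ)

lemma chooseRatio_eq_factorial (a b : ℕ) :
    chooseRatio a b =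
      ((a + b)! * (2 * a)! * (2 * b)! : ℝ) / (a ! * b ! * (2 * (a + b))!) := by
  have hcast :
      ((2 * (a + b)).choose (2 * a) : ℝ) = (2 * a + 2 * b)! / ((2 * a)! * (2 * b)!) := by
    rw [mul_add, Nat.cast_add_choose]
  rw [chooseRatio, Nat.cast_add_choose, hcast, ← mul_add]
  field_simp

lemma chooseRatio_comm (a b : ℕ) : chooseRatio a b = chooseRatio b a := by
  rw [chooseRatio_eq_factorial, chooseRatio_eq_factorial, add_comm b a]
  ring

lemma chooseRatio_succ_right (a b : ℕ) :
    chooseRatio a (b + 1) = chooseRatio a b * ((2 * b + 1) / (2 * (a + b) + 1)) := by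
  rw [chooseRatio_eq_factorial, chooseRatio_eq_factorial,
    show a + (b + 1) = a + b + 1 by ring, show 2 * (a + b + 1) = 2 * (a + b) + 1 + 1 by ring,
    show 2 * (b + 1) = 2 * b + 1 + 1 by ring]
  simp only [Nat.factorial_succ]
  push_cast
  field_simp
  ring

lemma chooseRatio_succ_right_le (a b : ℕ) : chooseRatio a (b + 1) ≤ chooseRatio a b := by
  rw [chooseRatio_succ_right]
  refine mul_le_of_le_one_right (by unfold chooseRatio; positivity) ?_
  rw [div_le_one (by positivity)]
  linarith [(Nat.cast_nonneg a : (0 : ℝ) ≤ a)]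

lemma chooseRatio_le_of_le {a a' b b' : ℕ} (ha : a ≤ a') (hb : b ≤ b') :
    chooseRatio a' b' ≤ chooseRatio a b :=
  calc chooseRatio a' b'
      ≤ chooseRatio a' b := antitone_nat_of_succ_le (chooseRatio_succ_right_le a') hb
    _ = chooseRatio b a' := chooseRatio_comm a' b
    _ ≤ chooseRatio b a := antitone_nat_of_succ_le (chooseRatio_succ_right_le b) ha
    _ = chooseRatio a b := chooseRatio_comm b a

theorem stmt_1_general (n k x y : ℕ) (hyx : y ≤ x) (hkn : k ≤ n) :
    ((n + x).choose (k + y) : ℝ) / ((2 * (n + x)).choose (2 * (k + y)) : ℝ) ≤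
      (n.choose k : ℝ) / ((2 * n).choose (2 * k) : ℝ) := by
  obtain ⟨m, rfl⟩ := Nat.exists_eq_add_of_le hkn
  obtain ⟨d, rfl⟩ := Nat.exists_eq_add_of_le hyx
  rw [show k + m + (y + d) = k + y + (m + d) by ring]
  show chooseRatio (k + y) (m + d) ≤ chooseRatio k m
  exact chooseRatio_le_of_le (by omega) (by omega)

theorem stmt_1 (n k x y : ℕ) (hyx : y ≤ x) (hkn : k ≤ n) (hky : k + y ≤ n + x) :
    ((n + x).choose (k + y) : ℝ) / ((2 * (n + x)).choose (2 * (k + y)) : ℝ) ≤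
      (n.choose k : ℝ) / ((2 * n).choose (2 * k) : ℝ) :=
  stmt_1_general n k x y hyx hkn
end

section
/- Let S, S' ⊆ [2m] be subsets with |S| = 2k, |S'| = 2k', and |S ∩ S'| = 2a. For a uniformly random permutation p of [2m], the probability that the image p(S) and the image p(S') are each simultaneously unions of the pairs {2i−1, 2i} equals multinomial(m; a, k−a, k'−a, m−k−k'+a) / multinomial(2m; 2a, 2(k−a), 2(k'−a), 2(m−k−k'+a)). -/
/-- The pair {2i, 2i+1} (0-indexed version of {2i−1, 2i}) inside Fin (2m). -/
def pairSet (m : ℕ) (i : Fin m) : Finset (Fin (2 * m)) :=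
  {⟨2 * i.val, by have := i.isLt; omega⟩, ⟨2 * i.val + 1, by have := i.isLt; omega⟩}

/-- T ⊆ [2m] is a union of pairs if it equals ∪_{i∈I} {2i, 2i+1} for some I ⊆ [m]. -/
def IsUnionOfPairs (m : ℕ) (T : Finset (Fin (2 * m))) : Prop :=
  ∃ I : Finset (Fin m), T = I.biUnion (pairSet m)

/-
Colour each point of `[2m]` by the pair `(x ∈ S, x ∈ S')`. Both `p(S)` and `p(S')` are unions of
pairs exactly when the colouring transported by `p` is constant on every pair, i.e. is pulled back
from a colouring `g` of `[m]` whose colour classes have sizes `a, b, c, d`. The permutations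
carrying one colouring to another with the same class sizes form a coset of its stabiliser, which
has `∏ (class size)!` elements. Hence the count is `G · (2a)! (2b)! (2c)! (2d)!`, where `G` is the
number of such colourings `g`, and the same coset count on `[m]` gives `m! = G · a! b! c! d!`.
-/

open Finset Function Equiv
open scoped Nat

section FiberCard

variable {α β γ : Type*}

noncomputable def fiberCard (f : α → β) (b : β) : ℕ := Nat.card {a // f a = b}

theorem sum_fiberCard [Finite α] [Fintype β] (f : α → β) : ∑ b, fiberCard f b = Nat.card α := by
  simp only [fiberCard]
  rw [← Nat.card_sigma, Nat.card_congr (sigmaFiberEquiv f)]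

theorem fiberCard_comp_perm (f : α → β) (σ : Perm α) : fiberCard (f ∘ σ) = fiberCard f :=
  funext fun _ => Nat.card_congr (σ.subtypeEquiv fun _ => Iff.rfl)

theorem exists_perm_comp_eq_of_fiberCard_eq [Finite α] {f g : α → β}
    (h : fiberCard g = fiberCard f) : ∃ σ : Perm α, f ∘ σ = g :=
  have e b : {a // g a = b} ≃ {a // f a = b} := (Finite.card_eq.1 (congr_fun h b)).some
  ⟨ofFiberEquiv e, funext (ofFiberEquiv_map e)⟩

theorem card_perm_comp_eq [Finite α] [Fintype β] {f g : α → β} (h : fiberCard g = fiberCard f) :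
    Nat.card {σ : Perm α // f ∘ σ = g} = ∏ b, (fiberCard f b)! := by
  classical
  have := Fintype.ofFinite α
  obtain ⟨τ, rfl⟩ := exists_perm_comp_eq_of_fiberCard_eq h
  -- right multiplication by `τ⁻¹` maps this coset onto the stabiliser of `f`
  have hτ (σ : Perm α) : f ∘ σ = f ∘ τ ↔ f ∘ ⇑(Equiv.mulRight τ⁻¹ σ) = f := by
    rw [coe_mulRight, Perm.coe_mul, Perm.inv_def, ← comp_assoc, comp_symm_eq]
  rw [Nat.card_congr ((Equiv.mulRight τ⁻¹).subtypeEquiv (q := fun σ : Perm α => f ∘ ⇑σ = f) hτ),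
    Nat.card_eq_fintype_card, DomMulAct.stabilizer_card]
  simp only [fiberCard, Nat.card_eq_fintype_card]

theorem card_perm_pred_comp [Finite α] [Fintype β] (f : α → β) (P : (α → β) → Prop) :
    Nat.card {σ : Perm α // P (f ∘ σ)} =
      Nat.card {g // P g ∧ fiberCard g = fiberCard f} * ∏ b, (fiberCard f b)! := by
  classical
  have := Fintype.ofFinite α
  let toColoring (s : {σ : Perm α // P (f ∘ σ)}) : {g // P g ∧ fiberCard g = fiberCard f} :=
    ⟨f ∘ s.1, s.2, fiberCard_comp_perm f s⟩
  have hfiber (g : {g // P g ∧ fiberCard g = fiberCard f}) :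
      Nat.card {s // toColoring s = g} = ∏ b, (fiberCard f b)! := by
    rw [← card_perm_comp_eq g.2.2]
    exact Nat.card_congr ((subtypeEquivRight fun _ => Subtype.ext_iff).trans
      (subtypeSubtypeEquivSubtype (p := fun σ : Perm α => P (f ∘ σ)) (q := fun σ => f ∘ ⇑σ = g.1)
        fun h => h ▸ g.2.1))
  rw [← Nat.card_congr (sigmaFiberEquiv toColoring), Nat.card_sigma,
    Finset.sum_congr rfl fun g _ => hfiber g, sum_const, Finset.card_univ, smul_eq_mul,
    Nat.card_eq_fintype_card]

theorem exists_fiberCard_eq [Finite α] [Fintype β] (n : β → ℕ) (hn : ∑ b, n b = Nat.card α) :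
    ∃ f : α → β, fiberCard f = n := by
  obtain ⟨e⟩ : Nonempty (α ≃ Σ b, Fin (n b)) := Finite.card_eq.1 (by simp [hn])
  refine ⟨fun a => (e a).1, funext fun b => ?_⟩
  rw [fiberCard, Nat.card_congr (e.subtypeEquiv (q := fun s => s.1 = b) fun _ => Iff.rfl),
    Nat.card_congr (sigmaSubtype b), Nat.card_eq_fintype_card, Fintype.card_fin]

theorem card_fiberCard_eq_mul_prod [Finite α] [Fintype β] (n : β → ℕ)
    (hn : ∑ b, n b = Nat.card α) :
    Nat.card {g : α → β // fiberCard g = n} * ∏ b, (n b)! = (Nat.card α)! := by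
  obtain ⟨f, rfl⟩ := exists_fiberCard_eq n hn
  have := card_perm_pred_comp f fun _ => True
  simp only [true_and] at this
  rw [← this, Nat.card_congr (Equiv.subtypeUnivEquiv fun _ => trivial), Nat.card_perm]

theorem fiberCard_comp_of_fiberCard_eq [Finite α] [Finite γ] {π : α → γ} {n : ℕ}
    (hπ : ∀ i, fiberCard π i = n) (g : γ → β) (b : β) :
    fiberCard (g ∘ π) b = n * fiberCard g b := by
  classical
  have := Fintype.ofFinite γ
  let toFiber (a : {a // g (π a) = b}) : {i // g i = b} := ⟨π a, a.2⟩
  have hfiber (i : {i // g i = b}) : Nat.card {a // toFiber a = i} = n := by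
    rw [← hπ i]
    exact Nat.card_congr ((subtypeEquivRight fun _ => Subtype.ext_iff).trans
      (subtypeSubtypeEquivSubtype (p := fun a => g (π a) = b) (q := fun a => π a = i)
        fun h => h ▸ i.2))
  change Nat.card {a // g (π a) = b} = _
  rw [← Nat.card_congr (sigmaFiberEquiv toFiber), Nat.card_sigma,
    Finset.sum_congr rfl fun i _ => hfiber i, sum_const, Finset.card_univ, smul_eq_mul, mul_comm,
    fiberCard, Nat.card_eq_fintype_card]

theorem card_factorsThrough_fiberCard_eq [Finite α] [Finite γ] {π : α → γ} {n : ℕ} (hn : n ≠ 0)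
    (hπ : ∀ i, fiberCard π i = n) (F : β → ℕ) :
    Nat.card {h : α → β // h.FactorsThrough π ∧ fiberCard h = fun b => n * F b} =
      Nat.card {g : γ → β // fiberCard g = F} := by
  have hsurj : Surjective π := fun i =>
    let ⟨a, ha⟩ := (Nat.card_ne_zero.1 ((hπ i).trans_ne hn)).1.some
    ⟨a, ha⟩
  have hpull (g : {g : γ → β // fiberCard g = F}) : fiberCard (g.1 ∘ π) = fun b => n * F b := by
    funext b; rw [fiberCard_comp_of_fiberCard_eq hπ, g.2]
  refine (Nat.card_congr (Equiv.ofBijective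
    (fun g => ⟨g.1 ∘ π, fun _ _ h => congrArg g.1 h, hpull g⟩) ⟨?_, ?_⟩)).symm
  · intro g g' h
    exact Subtype.ext (hsurj.injective_comp_right (congrArg Subtype.val h))
  · rintro ⟨h, hfac, hcard⟩
    have hcomp : (h ∘ surjInv hsurj) ∘ π = h :=
      funext fun a => hfac (surjInv_eq hsurj (π a))
    refine ⟨⟨h ∘ surjInv hsurj, funext fun b => ?_⟩, Subtype.ext hcomp⟩
    have := congr_fun hcard b
    rw [← hcomp, fiberCard_comp_of_fiberCard_eq hπ] at this
    exact Nat.eq_of_mul_eq_mul_left (Nat.pos_of_ne_zero hn) this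

theorem factorsThrough_prodMk_iff {δ : Type*} {π : α → γ} {f : α → β} {g : α → δ} :
    (fun a => (f a, g a)).FactorsThrough π ↔ f.FactorsThrough π ∧ g.FactorsThrough π :=
  ⟨fun h => ⟨fun _ _ e => congrArg Prod.fst (h e), fun _ _ e => congrArg Prod.snd (h e)⟩,
    fun h _ _ e => Prod.ext (h.1 e) (h.2 e)⟩

end FiberCard

section MemColoring

variable {α : Type*} [DecidableEq α]

def memColoring (S S' : Finset α) (x : α) : Bool × Bool :=
  (decide (x ∈ S), decide (x ∈ S'))

theorem fiberCard_memColoring [Fintype α] (S S' : Finset α) :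
    fiberCard (memColoring S S') = fun
      | (true, true) => #(S ∩ S')
      | (true, false) => #(S \ S')
      | (false, true) => #(S' \ S)
      | (false, false) => #((S ∪ S')ᶜ) := by
  funext ⟨b, b'⟩
  rw [fiberCard, Nat.card_eq_fintype_card, Fintype.card_subtype]
  cases b <;> cases b' <;> congr 1 <;> ext x <;> simp [memColoring, and_comm]

theorem mem_image_perm_iff (σ : Perm α) (T : Finset α) (x : α) : x ∈ T.image σ ↔ σ⁻¹ x ∈ T := by
  rw [Perm.inv_def, ← mem_map_equiv, map_eq_image]
  rfl

end MemColoring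

section Pairs

variable {m : ℕ}

def pairIdx (m : ℕ) (z : Fin (2 * m)) : Fin m := ⟨z / 2, by omega⟩

theorem mem_pairSet_iff {i : Fin m} {z : Fin (2 * m)} : z ∈ pairSet m i ↔ pairIdx m z = i := by
  simp only [pairSet, mem_insert, mem_singleton, Fin.ext_iff, pairIdx]
  omega

theorem fiberCard_pairIdx (i : Fin m) : fiberCard (pairIdx m) i = 2 := by
  rw [fiberCard, ← Nat.card_congr (subtypeEquivRight fun _ => mem_pairSet_iff),
    Nat.card_eq_finsetCard, pairSet, card_pair (by simp [Fin.ext_iff])]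

theorem isUnionOfPairs_iff_factorsThrough {T : Finset (Fin (2 * m))} :
    IsUnionOfPairs m T ↔ (fun z => decide (z ∈ T)).FactorsThrough (pairIdx m) := by
  simp only [FactorsThrough, decide_eq_decide]
  constructor
  · rintro ⟨I, rfl⟩ z w hzw
    simp only [mem_biUnion, mem_pairSet_iff, hzw]
  · intro H
    refine ⟨T.image (pairIdx m), ext fun z => ?_⟩
    simp only [mem_biUnion, mem_image, mem_pairSet_iff]
    exact ⟨fun hz => ⟨_, ⟨z, hz, rfl⟩, rfl⟩,
      fun ⟨_, ⟨w, hw, hwi⟩, hz⟩ => (H (hz.trans hwi.symm)).2 hw⟩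

theorem isUnionOfPairs_image_and_iff (S S' : Finset (Fin (2 * m))) (σ : Perm (Fin (2 * m))) :
    IsUnionOfPairs m (S.image σ) ∧ IsUnionOfPairs m (S'.image σ) ↔
      (memColoring S S' ∘ ⇑σ⁻¹).FactorsThrough (pairIdx m) := by
  simp only [isUnionOfPairs_iff_factorsThrough, mem_image_perm_iff]
  exact factorsThrough_prodMk_iff.symm

theorem card_perm_isUnionOfPairs (S S' : Finset (Fin (2 * m))) (n : Bool × Bool → ℕ)
    (hn : fiberCard (memColoring S S') = fun k => 2 * n k) :
    Nat.card {σ : Perm (Fin (2 * m)) //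
        IsUnionOfPairs m (S.image σ) ∧ IsUnionOfPairs m (S'.image σ)} =
      Nat.card {g : Fin m → Bool × Bool // fiberCard g = n} * ∏ k, (2 * n k)! :=
  calc _ = Nat.card {σ : Perm (Fin (2 * m)) //
          (memColoring S S' ∘ ⇑σ⁻¹).FactorsThrough (pairIdx m)} :=
        Nat.card_congr (subtypeEquivRight (isUnionOfPairs_image_and_iff S S'))
    _ = Nat.card {τ : Perm (Fin (2 * m)) //
          (memColoring S S' ∘ ⇑τ).FactorsThrough (pairIdx m)} :=
        Nat.card_congr ((Equiv.inv _).subtypeEquiv fun _ => Iff.rfl)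
    _ = _ := by
      rw [card_perm_pred_comp (memColoring S S') (FactorsThrough · (pairIdx m)), hn,
        card_factorsThrough_fiberCard_eq two_ne_zero fiberCard_pairIdx]

end Pairs

open Classical Nat in
theorem stmt_5 (m a b c d : ℕ) (S S' : Finset (Fin (2 * m)))
    (hab : (S ∩ S').card = 2 * a) (hb : (S \ S').card = 2 * b) (hc : (S' \ S).card = 2 * c)
    (hd : ((S ∪ S')ᶜ).card = 2 * d) :
    ((Finset.univ.filter fun p : Equiv.Perm (Fin (2 * m)) =>
        IsUnionOfPairs m (S.image p) ∧ IsUnionOfPairs m (S'.image p)).card : ℝ) /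
      ((Finset.univ : Finset (Equiv.Perm (Fin (2 * m)))).card : ℝ) =
      ((m.factorial : ℝ) / ((a.factorial : ℝ) * (b.factorial : ℝ) * (c.factorial : ℝ) *
          (d.factorial : ℝ))) /
        (((2 * m).factorial : ℝ) / (((2 * a).factorial : ℝ) * ((2 * b).factorial : ℝ) *
          ((2 * c).factorial : ℝ) * ((2 * d).factorial : ℝ))) := by
  let n : Bool × Bool → ℕ
    | (true, true) => a
    | (true, false) => b
    | (false, true) => c
    | (false, false) => d
  have hn : fiberCard (memColoring S S') = fun k => 2 * n k := by
    rw [fiberCard_memColoring, hab, hb, hc, hd]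
    funext ⟨b, b'⟩
    cases b <;> cases b' <;> rfl
  have hsum : ∑ k, n k = Nat.card (Fin m) := by
    have := sum_fiberCard (memColoring S S')
    rw [hn, ← mul_sum, Nat.card_eq_fintype_card, Fintype.card_fin] at this
    simp only [Nat.card_eq_fintype_card, Fintype.card_fin]
    omega
  have hcount := card_perm_isUnionOfPairs S S' n hn
  have hmultinomial := card_fiberCard_eq_mul_prod n hsum
  rw [Nat.card_eq_fintype_card, Fintype.card_subtype] at hcount
  rw [Nat.card_eq_fintype_card (α := Fin m), Fintype.card_fin] at hmultinomial
  rw [hcount, Finset.card_univ, Fintype.card_perm, Fintype.card_fin, ← hmultinomial]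
  simp only [Fintype.prod_prod_type, Fintype.prod_bool, n]
  push_cast
  field_simp
end

section
/- Let m ≥ 1, ω = exp(2πi/(m+1)), and f : {0,...,m} → ℂ. Define the 2^m × 2^m diagonal matrix M = ∑_{b ∈ {0,1}^m} f(|b|) |b⟩⟨b|, where |b| is the Hamming weight. Then M = ∑_{j=0}^{m} c_j · (diag(1, ω^{−j}))^{⊗m}, where c_j = (1/(m+1)) ∑_{i=0}^{m} ω^{ij} f(i). -/
/-!
Both sides are diagonal, and the product in the entry at `b` collapses to `ω^{-j|b|}`, so at `b`
the claim is discrete Fourier inversion `∑_j c_j ω^{-j w} = f w` for `w = |b| ≤ m`. This follows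
from the orthogonality `∑_{j ≤ m} ω^{(i - w) j} = (m + 1) [i = w]` for `i, w ≤ m`, since
`ω^{i - w} = 1` exactly when `m + 1 ∣ i - w`.
-/

open Finset

namespace IsPrimitiveRoot

variable {K : Type*} [Field K] {ζ : K} {n : ℕ}

theorem geom_sum_zpow (hζ : IsPrimitiveRoot ζ n) (a : ℤ) :
    ∑ j ∈ range n, (ζ ^ a) ^ j = if (n : ℤ) ∣ a then (n : K) else 0 := by
  split_ifs with ha
  · simp [(hζ.zpow_eq_one_iff_dvd a).2 ha]
  · have hne : ζ ^ a ≠ 1 := mt (hζ.zpow_eq_one_iff_dvd a).1 ha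
    rw [geom_sum_eq hne, ← zpow_natCast, ← zpow_mul, mul_comm, zpow_mul, zpow_natCast,
      hζ.pow_eq_one, one_zpow, sub_self, zero_div]

theorem sum_pow_mul_inv_pow_eq_ite (hζ : IsPrimitiveRoot ζ n) {i w : ℕ} (hi : i < n)
    (hw : w < n) :
    ∑ j ∈ range n, ζ ^ (i * j) * ((ζ ^ j)⁻¹) ^ w = if i = w then (n : K) else 0 := by
  have hζ0 : ζ ≠ 0 := hζ.ne_zero (by omega)
  have hterm : ∀ j, ζ ^ (i * j) * ((ζ ^ j)⁻¹) ^ w = (ζ ^ ((i : ℤ) - w)) ^ j := fun j => by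
    rw [zpow_sub₀ hζ0, div_pow, zpow_natCast, zpow_natCast, ← pow_mul, inv_pow, ← pow_mul,
      ← pow_mul, mul_comm w, div_eq_mul_inv]
  simp_rw [hterm, hζ.geom_sum_zpow, ← Nat.modEq_iff_dvd]
  congr 1
  exact propext ⟨fun h => (h.eq_of_lt_of_lt hw hi).symm, fun h => h ▸ rfl⟩

theorem sum_dft_mul_inv_pow (hζ : IsPrimitiveRoot ζ n) (f : ℕ → K) {w : ℕ} (hw : w < n) :
    ∑ j ∈ range n, (1 / n * ∑ i ∈ range n, ζ ^ (i * j) * f i) * ((ζ ^ j)⁻¹) ^ w = f w := by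
  have : NeZero n := ⟨by omega⟩
  have hn : (n : K) ≠ 0 := hζ.neZero'.out
  calc ∑ j ∈ range n, (1 / n * ∑ i ∈ range n, ζ ^ (i * j) * f i) * ((ζ ^ j)⁻¹) ^ w
      = 1 / n * ∑ i ∈ range n, f i * ∑ j ∈ range n, ζ ^ (i * j) * ((ζ ^ j)⁻¹) ^ w := by
        simp only [mul_sum, sum_mul]
        rw [sum_comm]
        exact sum_congr rfl fun _ _ => sum_congr rfl fun _ _ => by ring
    _ = 1 / n * ∑ i ∈ range n, f i * if i = w then (n : K) else 0 := by
        congr 1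
        exact sum_congr rfl fun i hi => by
          rw [hζ.sum_pow_mul_inv_pow_eq_ite (mem_range.1 hi) hw]
    _ = f w := by
        simp only [mul_ite, mul_zero, sum_ite_eq', mem_range.2 hw, if_true]
        field_simp

end IsPrimitiveRoot

theorem sum_val_fin_two_le {m : ℕ} (b : Fin m → Fin 2) : ∑ i, (b i).val ≤ m := by
  simpa using sum_le_sum fun i (_ : i ∈ univ) => Nat.le_of_lt_succ (b i).isLt

open Complex in
theorem stmt_11_general (m : ℕ) (f : ℕ → ℂ)
    (ω : ℂ) (hω : ω = Complex.exp (2 * Real.pi * Complex.I / (m + 1)))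
    (c : ℕ → ℂ) (hc : ∀ j, c j = (1 / (m + 1)) * ∑ i ∈ Finset.range (m + 1), ω ^ (i * j) * f i) :
    Matrix.diagonal (fun b : Fin m → Fin 2 => f (∑ i, (b i).val)) =
      ∑ j ∈ Finset.range (m + 1),
        c j • Matrix.diagonal (fun b : Fin m → Fin 2 => ∏ i, ((ω ^ j)⁻¹) ^ (b i).val) := by
  have hω' : IsPrimitiveRoot ω (m + 1) := by
    subst hω
    exact_mod_cast Complex.isPrimitiveRoot_exp (m + 1) m.succ_ne_zero
  ext b b'
  rcases eq_or_ne b b' with rfl | hb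
  · have hinv := hω'.sum_dft_mul_inv_pow f (Nat.lt_succ_of_le (sum_val_fin_two_le b))
    push_cast at hinv
    simp only [Matrix.diagonal_apply_eq, Matrix.sum_apply, Matrix.smul_apply, smul_eq_mul,
      prod_pow_eq_pow_sum, hc]
    exact hinv.symm
  · simp [Matrix.sum_apply, hb]

open Complex in
theorem stmt_11 (m : ℕ) (hm : 1 ≤ m) (f : ℕ → ℂ)
    (ω : ℂ) (hω : ω = Complex.exp (2 * Real.pi * Complex.I / (m + 1)))
    (c : ℕ → ℂ) (hc : ∀ j, c j = (1 / (m + 1)) * ∑ i ∈ Finset.range (m + 1), ω ^ (i * j) * f i) :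
    Matrix.diagonal (fun b : Fin m → Fin 2 => f (∑ i, (b i).val)) =
      ∑ j ∈ Finset.range (m + 1),
        c j • Matrix.diagonal (fun b : Fin m → Fin 2 => ∏ i, ((ω ^ j)⁻¹) ^ (b i).val) :=
  stmt_11_general m f ω hω c hc
end

section
/- Let A be an n×n complex matrix, and let I ⊆ [n]. For each i, let K_i be the closed disc in ℂ centered at A_{ii} with radius ∑_{k≠i} |A_{ik}|. If ∪_{i∈I} K_i is disjoint from ∪_{i∉I} K_i, then exactly |I| eigenvalues of A (counted with algebraic multiplicity) lie in ∪_{i∈I} K_i. -/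
/-!
Deform `A` to its diagonal through `A_t`, the matrix with off-diagonal entries scaled by
`t ∈ [0, 1]`. The Gershgorin discs of `A_t` have the same centres as those of `A` and smaller radii,
so every eigenvalue of `A_t` lies in `U ∪ V`, where `U` and `V` are the two disjoint compact unions
of discs. Since the roots of a monic polynomial depend continuously on its coefficients, the number
of eigenvalues of `A_t` in `U` is a locally constant, hence constant, function of `t`. At `t = 0`
the eigenvalues are the diagonal entries, and `A i i ∈ U` exactly when `i ∈ I`.
-/

open Filter Topology Set Polynomial

theorem Multiset.exists_eq_map_univ_val {α : Type*} {s : Multiset α} {n : ℕ}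
    (hs : Multiset.card s = n) : ∃ z : Fin n → α, s = Finset.univ.val.map z := by
  obtain ⟨l, rfl⟩ : ∃ l : List α, (l : Multiset α) = s := Quotient.exists_rep s
  rw [Multiset.coe_card] at hs
  subst hs
  exact ⟨l.get, by rw [Fin.univ_val_map, List.ofFn_get]⟩

theorem eventually_mem_iff_of_tendsto {X α : Type*} [TopologicalSpace X] {l : Filter α}
    {U V : Set X} (hU : IsClosed U) (hV : IsClosed V) (hUV : Disjoint U V) {f : α → X} {x : X}
    (hf : Tendsto f l (𝓝 x)) (hfUV : ∀ a, f a ∈ U ∪ V) (hx : x ∈ U ∪ V) :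
    ∀ᶠ a in l, f a ∈ U ↔ x ∈ U := by
  rcases hx with hxU | hxV
  · filter_upwards [hf (hV.isOpen_compl.mem_nhds (hUV.notMem_of_mem_left hxU))] with a ha
    exact iff_of_true ((hfUV a).resolve_right ha) hxU
  · filter_upwards [hf (hU.isOpen_compl.mem_nhds (hUV.notMem_of_mem_right hxV))] with a ha
    exact iff_of_false ha (hUV.notMem_of_mem_right hxV)

theorem eventually_card_filter_map_eq {X ι α : Type*} [TopologicalSpace X] [Fintype ι]
    {l : Filter α} [l.NeBot] {U V : Set X} [DecidablePred (· ∈ U)] (hU : IsClosed U)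
    (hV : IsClosed V) (hUV : Disjoint U V) {z : α → ι → X} {w : ι → X}
    (hz : Tendsto z l (𝓝 w)) (hzUV : ∀ a j, z a j ∈ U ∪ V) :
    ∀ᶠ a in l, ((Finset.univ.val.map (z a)).filter (· ∈ U)).card =
      ((Finset.univ.val.map w).filter (· ∈ U)).card := by
  have hzj : ∀ j, Tendsto (fun a => z a j) l (𝓝 (w j)) := tendsto_pi_nhds.1 hz
  have hwUV : ∀ j, w j ∈ U ∪ V := fun j =>
    (hU.union hV).mem_of_tendsto (hzj j) (Eventually.of_forall fun a => hzUV a j)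
  filter_upwards [eventually_all.2 fun j =>
    eventually_mem_iff_of_tendsto hU hV hUV (hzj j) (fun a => hzUV a j) (hwUV j)] with a ha
  simp only [Multiset.filter_map, Multiset.card_map]
  exact congrArg _ (Multiset.filter_congr fun j _ => ha j)

namespace Polynomial

theorem roots_prod_univ_X_sub_C {R ι : Type*} [CommRing R] [IsDomain R] [Fintype ι]
    (z : ι → R) : (∏ j, (X - C (z j))).roots = Finset.univ.val.map z := by
  rw [Finset.prod_eq_multiset_prod, ← roots_multiset_prod_X_sub_C (Finset.univ.val.map z),
    Multiset.map_map]
  rfl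

theorem exists_eq_prod_X_sub_C {K : Type*} [Field K] [IsAlgClosed K] {p : K[X]} {n : ℕ}
    (hp : p.Monic) (hn : p.natDegree = n) : ∃ z : Fin n → K, p = ∏ j, (X - C (z j)) := by
  obtain ⟨z, hz⟩ := Multiset.exists_eq_map_univ_val (IsAlgClosed.card_roots_eq_natDegree.trans hn)
  refine ⟨z, ?_⟩
  rw [(IsAlgClosed.splits p).eq_prod_roots_of_monic hp, hz, Multiset.map_map,
    Finset.prod_eq_multiset_prod]
  rfl

theorem eq_prod_X_sub_C_of_tendsto {K ι α : Type*} [Field K] [Infinite K] [TopologicalSpace K]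
    [IsTopologicalRing K] [T2Space K] [Fintype ι] {l : Filter α} [l.NeBot] {p : α → K[X]}
    {q : K[X]} {z : α → ι → K} {w : ι → K} (hp : ∀ a, p a = ∏ j, (X - C (z a j)))
    (hz : Tendsto z l (𝓝 w)) (hq : ∀ x, Tendsto (fun a => (p a).eval x) l (𝓝 (q.eval x))) :
    q = ∏ j, (X - C (w j)) := by
  refine Polynomial.funext fun x => tendsto_nhds_unique (hq x) ?_
  simp only [hp, eval_prod, eval_sub, eval_X, eval_C]
  exact tendsto_finsetProd _ fun j _ => tendsto_const_nhds.sub (tendsto_pi_nhds.1 hz j)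

theorem continuous_card_filter_roots {K T : Type*} [NormedField K] [IsAlgClosed K]
    [TopologicalSpace T] [SequentialSpace T] {n : ℕ} {p : T → K[X]} (hmonic : ∀ x, (p x).Monic)
    (hdeg : ∀ x, (p x).natDegree = n) (hcont : ∀ w, Continuous fun x => (p x).eval w)
    {U V : Set K} [DecidablePred (· ∈ U)] (hU : IsCompact U) (hV : IsCompact V)
    (hUV : Disjoint U V) (hroots : ∀ x, ∀ z ∈ (p x).roots, z ∈ U ∪ V) :
    Continuous fun x => ((p x).roots.filter (· ∈ U)).card := by
  refine continuous_iff_seqContinuous.2 fun t x₀ ht => tendsto_of_subseq_tendsto fun ns hns => ?_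
  -- Enumerate the roots along the sequence; by compactness a subsequence of the enumerations
  -- converges, and the limit enumerates the roots of the limit polynomial.
  choose z hz using fun k => exists_eq_prod_X_sub_C (hmonic (t (ns k))) (hdeg _)
  have hzUV : ∀ k j, z k j ∈ U ∪ V := fun k j =>
    hroots _ _ <| by
      rw [hz k, roots_prod_univ_X_sub_C]
      exact Multiset.mem_map_of_mem _ (Finset.mem_univ j)
  obtain ⟨w, -, φ, hφ, hzw⟩ := (isCompact_univ_pi fun _ : Fin n => hU.union hV).tendsto_subseq
    (x := z) fun k => mem_univ_pi.2 (hzUV k)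
  have hw : p x₀ = ∏ j, (X - C (w j)) := eq_prod_X_sub_C_of_tendsto (fun k => hz (φ k)) hzw
    fun y => ((hcont y).tendsto x₀).comp (ht.comp (hns.comp hφ.tendsto_atTop))
  refine ⟨φ, ?_⟩
  rw [nhds_discrete, tendsto_pure]
  filter_upwards [eventually_card_filter_map_eq hU.isClosed hV.isClosed hUV hzw
    fun k => hzUV (φ k)] with k hk
  simp only [Function.comp_apply] at hk ⊢
  rw [hz, hw, roots_prod_univ_X_sub_C, roots_prod_univ_X_sub_C, hk]

end Polynomial

namespace Matrix

variable {n : Type*} [DecidableEq n]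

def scaleOffDiag {R : Type*} [Mul R] (t : R) (A : Matrix n n R) : Matrix n n R :=
  of fun i j => if i = j then A i i else t * A i j

section

variable {R : Type*} [Semiring R] (A : Matrix n n R)

theorem scaleOffDiag_one : scaleOffDiag 1 A = A := by
  ext i j
  by_cases h : i = j <;> simp [scaleOffDiag, h]

theorem scaleOffDiag_zero : scaleOffDiag 0 A = diagonal A.diag := by
  ext i j
  by_cases h : i = j <;> simp [scaleOffDiag, h]

theorem continuous_scaleOffDiag [TopologicalSpace R] [IsTopologicalSemiring R] :
    Continuous fun t : R => scaleOffDiag t A :=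
  continuous_matrix fun i j => by
    by_cases h : i = j <;> simp only [scaleOffDiag, of_apply, h, if_true, if_false] <;> fun_prop

end

variable [Fintype n]

theorem continuous_eval_charpoly {R T : Type*} [CommRing R] [TopologicalSpace R]
    [IsTopologicalRing R] [TopologicalSpace T] {M : T → Matrix n n R} (hM : Continuous M)
    (w : R) : Continuous fun x => (M x).charpoly.eval w := by
  simp only [eval_charpoly]
  exact (continuous_const.sub hM).matrix_det

def gershgorinDisc {K : Type*} [NormedField K] (A : Matrix n n K) (i : n) : Set K :=
  Metric.closedBall (A i i) (∑ k ∈ Finset.univ.erase i, ‖A i k‖)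

variable {K : Type*} [NormedField K] {A : Matrix n n K}

theorem diag_mem_gershgorinDisc (i : n) : A i i ∈ A.gershgorinDisc i :=
  Metric.mem_closedBall_self (Finset.sum_nonneg fun _ _ => norm_nonneg _)

theorem exists_mem_gershgorinDisc_of_mem_roots_charpoly {z : K} (hz : z ∈ A.charpoly.roots) :
    ∃ i, z ∈ A.gershgorinDisc i := by
  refine eigenvalue_mem_ball ((Module.End.hasEigenvalue_iff_isRoot_charpoly _ _).2 ?_)
  rw [charpoly_toLin']
  exact isRoot_of_mem_roots hz

theorem gershgorinDisc_scaleOffDiag_subset {t : K} (ht : ‖t‖ ≤ 1) (i : n) :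
    (scaleOffDiag t A).gershgorinDisc i ⊆ A.gershgorinDisc i := by
  simp only [gershgorinDisc, scaleOffDiag, of_apply, ↓reduceIte]
  refine Metric.closedBall_subset_closedBall (Finset.sum_le_sum fun k hk => ?_)
  rw [if_neg (Finset.ne_of_mem_erase hk).symm, norm_mul]
  exact mul_le_of_le_one_left (norm_nonneg _) ht

theorem mem_iUnion_gershgorinDisc_of_mem_roots_charpoly_scaleOffDiag {t z : K} (ht : ‖t‖ ≤ 1)
    (hz : z ∈ (scaleOffDiag t A).charpoly.roots) : z ∈ ⋃ i, A.gershgorinDisc i :=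
  let ⟨i, hi⟩ := exists_mem_gershgorinDisc_of_mem_roots_charpoly hz
  mem_iUnion_of_mem i (gershgorinDisc_scaleOffDiag_subset ht i hi)

theorem diag_mem_iUnion_gershgorinDisc_iff {I : Finset n}
    (hI : Disjoint (⋃ i ∈ I, A.gershgorinDisc i) (⋃ i ∈ Iᶜ, A.gershgorinDisc i)) (i : n) :
    A i i ∈ ⋃ j ∈ I, A.gershgorinDisc j ↔ i ∈ I := by
  refine ⟨fun hi => by_contra fun hni => hI.notMem_of_mem_left hi ?_, fun hi => ?_⟩
  · exact mem_biUnion (Finset.mem_compl.2 hni) (diag_mem_gershgorinDisc i)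
  · exact mem_biUnion hi (diag_mem_gershgorinDisc i)

theorem card_filter_diag_mem_iUnion_gershgorinDisc {I : Finset n}
    (hI : Disjoint (⋃ i ∈ I, A.gershgorinDisc i) (⋃ i ∈ Iᶜ, A.gershgorinDisc i))
    [DecidablePred (· ∈ ⋃ i ∈ I, A.gershgorinDisc i)] :
    ((Finset.univ.val.map A.diag).filter (· ∈ ⋃ i ∈ I, A.gershgorinDisc i)).card = I.card := by
  rw [Multiset.filter_map, Multiset.card_map]
  change (Finset.univ.filter fun i => A i i ∈ ⋃ j ∈ I, A.gershgorinDisc j).card = I.card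
  rw [Finset.filter_congr fun i _ => diag_mem_iUnion_gershgorinDisc_iff hI i,
    Finset.filter_mem_eq_of_subset I.subset_univ]

end Matrix

open Matrix

open Classical in
/-- Disjoint-component refinement of the Gershgorin circle theorem: if the union of the
Gershgorin discs indexed by `I` is disjoint from the union of the remaining discs, then
exactly `|I|` eigenvalues (roots of the characteristic polynomial, with multiplicity)
lie in the former union. -/
theorem stmt_12 (n : ℕ) (A : Matrix (Fin n) (Fin n) ℂ) (I : Finset (Fin n))
    (K : Fin n → Set ℂ)
    (hK : ∀ i, K i = Metric.closedBall (A i i) (∑ k ∈ Finset.univ.erase i, ‖A i k‖))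
    (hdisj : Disjoint (⋃ i ∈ I, K i) (⋃ i ∈ (Iᶜ : Finset (Fin n)), K i)) :
    (((Matrix.charpoly A).roots.filter fun z => z ∈ ⋃ i ∈ I, K i).card) = I.card := by
  obtain rfl : K = A.gershgorinDisc := funext hK
  have hcompact (J : Finset (Fin n)) : IsCompact (⋃ i ∈ J, A.gershgorinDisc i) :=
    J.finite_toSet.isCompact_biUnion fun i _ => isCompact_closedBall _ _
  have hroots (t : unitInterval) (z : ℂ) (hz : z ∈ (scaleOffDiag (t : ℂ) A).charpoly.roots) :
      z ∈ (⋃ i ∈ I, A.gershgorinDisc i) ∪ ⋃ i ∈ Iᶜ, A.gershgorinDisc i := by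
    have ht : ‖(t : ℂ)‖ ≤ 1 := by
      rw [Complex.norm_real, Real.norm_of_nonneg t.2.1]
      exact unitInterval.le_one t
    rw [← Finset.set_biUnion_union, Finset.union_compl]
    simpa using mem_iUnion_gershgorinDisc_of_mem_roots_charpoly_scaleOffDiag ht hz
  have hpath : Continuous fun t : unitInterval => scaleOffDiag (t : ℂ) A :=
    (continuous_scaleOffDiag A).comp (Complex.continuous_ofReal.comp continuous_subtype_val)
  have hconst := PreconnectedSpace.constant inferInstance
    (continuous_card_filter_roots (fun _ => charpoly_monic _)
      (fun _ => by rw [charpoly_natDegree_eq_dim, Fintype.card_fin]) (continuous_eval_charpoly hpath)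
      (hcompact I) (hcompact Iᶜ) hdisj hroots) (x := 1) (y := 0)
  simp only [Set.Icc.coe_one, Set.Icc.coe_zero, Complex.ofReal_one, Complex.ofReal_zero,
    scaleOffDiag_one, scaleOffDiag_zero, charpoly_diagonal, roots_prod_univ_X_sub_C] at hconst
  rw [hconst, card_filter_diag_mem_iUnion_gershgorinDisc hdisj]
end

section
/- Let R = U† Π U and R̃ = R + E, where U is an m×m unitary, Π is the diagonal projection onto the first n coordinates, E is Hermitian with |E_{ij}| ≤ ε for all i,j, and ε < 1/(2m³). Let Ũ be a unitary diagonalizing R̃ as Ũ R̃ Ũ† = Λ with Λ diagonal with non-increasing real diagonal entries. Then ‖Λ − Π‖ + ‖Ũ E Ũ†‖ ≤ 2m³ε, where ‖·‖ is the operator norm. -/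
/-!
Everything rests on Weyl's perturbation inequality. `R' = V† Λ V` and `R = U† Π U` have
non-increasing spectra `d` and `π`, and `R' - R = E`, so `|d i - π i| ≤ ‖E‖` for every `i`:
the `i + (m - 1 - i)` linear conditions "`(V w)_j = 0` for `j < i`, `(U w)_j = 0` for `j > i`"
leave a nonzero `w`, at which the quadratic form of `R'` is at most `d i ‖w‖²` and that of `R`
at least `π i ‖w‖²`, while the two differ by at most `‖E‖ ‖w‖²`. Hence `‖Λ - Π‖ ≤ ‖E‖`; unitary
invariance of the operator norm gives `‖V E V†‖ = ‖E‖`, and the entrywise bound gives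
`‖E‖ ≤ m ε ≤ m³ ε`.
-/

open Matrix Finset WithLp
open scoped Matrix.Norms.L2Operator

section

variable {𝕜 : Type*} [RCLike 𝕜] {ι : Type*} [Fintype ι]

lemma sum_mul_norm_sq_le_of_ne_zero (e : ι → ℝ) (c : ι → 𝕜) (a : ℝ)
    (h : ∀ j, c j ≠ 0 → e j ≤ a) :
    ∑ j, e j * ‖c j‖ ^ 2 ≤ a * ∑ j, ‖c j‖ ^ 2 := by
  rw [mul_sum]
  refine sum_le_sum fun j _ => ?_
  by_cases hj : c j = 0
  · simp [hj]
  · exact mul_le_mul_of_nonneg_right (h j hj) (by positivity)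

lemma le_sum_mul_norm_sq_of_ne_zero (e : ι → ℝ) (c : ι → 𝕜) (a : ℝ)
    (h : ∀ j, c j ≠ 0 → a ≤ e j) :
    a * ∑ j, ‖c j‖ ^ 2 ≤ ∑ j, e j * ‖c j‖ ^ 2 := by
  rw [mul_sum]
  refine sum_le_sum fun j _ => ?_
  by_cases hj : c j = 0
  · simp [hj]
  · exact mul_le_mul_of_nonneg_right (h j hj) (by positivity)

end

namespace Matrix

variable {𝕜 : Type*} [RCLike 𝕜] {n : Type*} [Fintype n]

lemma star_dotProduct_diagonal_mulVec [DecidableEq n] (e : n → ℝ) (c : n → 𝕜) :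
    star c ⬝ᵥ diagonal (fun i => (e i : 𝕜)) *ᵥ c = ((∑ j, e j * ‖c j‖ ^ 2 : ℝ) : 𝕜) := by
  simp only [dotProduct, Pi.star_apply, mulVec_diagonal, RCLike.ofReal_sum, RCLike.ofReal_mul,
    RCLike.ofReal_pow]
  refine sum_congr rfl fun j _ => ?_
  rw [← RCLike.conj_mul, RCLike.star_def]
  ring

lemma star_dotProduct_conjTranspose_mul_mul_mulVec {m : Type*} [Fintype m]
    (M : Matrix m n 𝕜) (Q : Matrix m m 𝕜) (w : n → 𝕜) :
    star w ⬝ᵥ (Mᴴ * Q * M) *ᵥ w = star (M *ᵥ w) ⬝ᵥ Q *ᵥ (M *ᵥ w) := by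
  rw [← mulVec_mulVec, ← mulVec_mulVec, dotProduct_mulVec, ← star_mulVec]

lemma sum_norm_sq_mulVec_of_mem_unitaryGroup [DecidableEq n] {V : Matrix n n 𝕜}
    (hV : V ∈ unitaryGroup n 𝕜) (w : n → 𝕜) :
    ∑ j, ‖(V *ᵥ w) j‖ ^ 2 = ∑ j, ‖w j‖ ^ 2 := by
  have hself (c : n → 𝕜) : star c ⬝ᵥ c = ((∑ j, ‖c j‖ ^ 2 : ℝ) : 𝕜) := by
    simpa using star_dotProduct_diagonal_mulVec (fun _ => 1) c
  have h : star (V *ᵥ w) ⬝ᵥ V *ᵥ w = star w ⬝ᵥ w := by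
    rw [star_mulVec, ← dotProduct_mulVec, mulVec_mulVec, ← star_eq_conjTranspose,
      (mem_unitaryGroup_iff').mp hV, one_mulVec]
  exact_mod_cast (hself _).symm.trans (h.trans (hself w))

lemma norm_star_dotProduct_mulVec_le [DecidableEq n] (M : Matrix n n 𝕜) (w : n → 𝕜) :
    ‖star w ⬝ᵥ M *ᵥ w‖ ≤ ‖M‖ * ∑ j, ‖w j‖ ^ 2 := by
  have hw : ∑ j, ‖w j‖ ^ 2 = ‖toLp 2 w‖ ^ 2 := by simp [EuclideanSpace.norm_sq_eq]
  calc ‖star w ⬝ᵥ M *ᵥ w‖ = ‖inner 𝕜 (toLp 2 w) (toLp 2 (M *ᵥ w))‖ := by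
        rw [EuclideanSpace.inner_toLp_toLp, dotProduct_comm]
    _ ≤ ‖toLp 2 w‖ * ‖toLp 2 (M *ᵥ w)‖ := norm_inner_le_norm _ _
    _ ≤ ‖toLp 2 w‖ * (‖M‖ * ‖toLp 2 w‖) := by
        gcongr
        exact M.l2_opNorm_mulVec (toLp 2 w)
    _ = ‖M‖ * ∑ j, ‖w j‖ ^ 2 := by rw [hw]; ring

lemma exists_ne_zero_mulVec_apply_eq_zero {K ι κ μ : Type*} [Field K] [Fintype ι]
    [Fintype κ] [Fintype μ] (A : Matrix κ ι K) (B : Matrix μ ι K) (s : Finset κ)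
    (t : Finset μ) (h : #s + #t < Fintype.card ι) :
    ∃ w : ι → K, w ≠ 0 ∧ (∀ j ∈ s, (A *ᵥ w) j = 0) ∧ ∀ j ∈ t, (B *ᵥ w) j = 0 := by
  let L : (ι → K) →ₗ[K] (s → K) × (t → K) :=
    ((LinearMap.funLeft K K Subtype.val).comp A.mulVecLin).prod
      ((LinearMap.funLeft K K Subtype.val).comp B.mulVecLin)
  have hker : LinearMap.ker L ≠ ⊥ := LinearMap.ker_ne_bot_of_finrank_lt (by simpa using h)
  obtain ⟨w, hw, hw0⟩ := Submodule.exists_mem_ne_zero_of_ne_bot hker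
  have hLw : L w = 0 := hw
  exact ⟨w, hw0, fun j hj => congrFun (congrArg Prod.fst hLw) ⟨j, hj⟩,
    fun j hj => congrFun (congrArg Prod.snd hLw) ⟨j, hj⟩⟩

lemma le_add_l2_opNorm_sub_of_antitone {m : ℕ} {d p : Fin m → ℝ} (hd : Antitone d)
    (hp : Antitone p) {V U : Matrix (Fin m) (Fin m) 𝕜} (hV : V ∈ unitaryGroup (Fin m) 𝕜)
    (hU : U ∈ unitaryGroup (Fin m) 𝕜) (i : Fin m) :
    p i ≤ d i +
      ‖Uᴴ * diagonal (fun j => (p j : 𝕜)) * U - Vᴴ * diagonal (fun j => (d j : 𝕜)) * V‖ := by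
  obtain ⟨w, hw0, hVw, hUw⟩ := exists_ne_zero_mulVec_apply_eq_zero V U (Iio i) (Ioi i) (by
    rw [Fin.card_Iio, Fin.card_Ioi, Fintype.card_fin]; omega)
  have hN : 0 < ∑ j, ‖w j‖ ^ 2 := by
    obtain ⟨j, hj⟩ := Function.ne_iff.mp hw0
    exact sum_pos' (fun _ _ => by positivity)
      ⟨j, mem_univ j, pow_pos (norm_pos_iff.mpr (by simpa using hj)) 2⟩
  have hA : ∑ j, d j * ‖(V *ᵥ w) j‖ ^ 2 ≤ d i * ∑ j, ‖w j‖ ^ 2 := by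
    rw [← sum_norm_sq_mulVec_of_mem_unitaryGroup hV w]
    refine sum_mul_norm_sq_le_of_ne_zero _ _ _ fun j hj => hd ?_
    by_contra! hji
    exact hj (hVw j (mem_Iio.mpr hji))
  have hB : p i * ∑ j, ‖w j‖ ^ 2 ≤ ∑ j, p j * ‖(U *ᵥ w) j‖ ^ 2 := by
    rw [← sum_norm_sq_mulVec_of_mem_unitaryGroup hU w]
    refine le_sum_mul_norm_sq_of_ne_zero _ _ _ fun j hj => hp ?_
    by_contra! hij
    exact hj (hUw j (mem_Ioi.mpr hij))
  have hquad := norm_star_dotProduct_mulVec_le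
    (Uᴴ * diagonal (fun j => (p j : 𝕜)) * U - Vᴴ * diagonal (fun j => (d j : 𝕜)) * V) w
  rw [sub_mulVec, dotProduct_sub, star_dotProduct_conjTranspose_mul_mul_mulVec,
    star_dotProduct_conjTranspose_mul_mul_mulVec, star_dotProduct_diagonal_mulVec,
    star_dotProduct_diagonal_mulVec, ← RCLike.ofReal_sub, RCLike.norm_ofReal] at hquad
  refine le_of_mul_le_mul_right ?_ hN
  linarith [le_abs_self (∑ j, p j * ‖(U *ᵥ w) j‖ ^ 2 - ∑ j, d j * ‖(V *ᵥ w) j‖ ^ 2)]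

lemma abs_sub_le_l2_opNorm_sub_of_antitone {m : ℕ} {d p : Fin m → ℝ} (hd : Antitone d)
    (hp : Antitone p) {V U : Matrix (Fin m) (Fin m) 𝕜} (hV : V ∈ unitaryGroup (Fin m) 𝕜)
    (hU : U ∈ unitaryGroup (Fin m) 𝕜) (i : Fin m) :
    |d i - p i| ≤
      ‖Vᴴ * diagonal (fun j => (d j : 𝕜)) * V - Uᴴ * diagonal (fun j => (p j : 𝕜)) * U‖ := by
  have hpd := le_add_l2_opNorm_sub_of_antitone hd hp hV hU i
  have hdp := le_add_l2_opNorm_sub_of_antitone hp hd hU hV i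
  rw [norm_sub_rev] at hpd
  exact abs_sub_le_iff.mpr ⟨by linarith, by linarith⟩

lemma l2_opNorm_le_card_mul_of_norm_apply_le [DecidableEq n] {A : Matrix n n 𝕜} {ε : ℝ}
    (hε : 0 ≤ ε) (hA : ∀ i j, ‖A i j‖ ≤ ε) :
    ‖A‖ ≤ Fintype.card n * ε := by
  refine ContinuousLinearMap.opNorm_le_bound _ (by positivity) fun x => ?_
  refine (sq_le_sq₀ (by positivity) (by positivity)).mp ?_
  have hrow (i : n) : ‖(A *ᵥ ofLp x) i‖ ≤ ε * ∑ j, ‖x j‖ := by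
    refine (norm_sum_le _ _).trans ?_
    rw [mul_sum]
    refine sum_le_sum fun j _ => ?_
    rw [norm_mul]
    exact mul_le_mul_of_nonneg_right (hA i j) (norm_nonneg _)
  have hCS : (∑ j, ‖x j‖) ^ 2 ≤ Fintype.card n * ∑ j, ‖x j‖ ^ 2 := by
    simpa using sq_sum_le_card_mul_sum_sq (s := univ) (f := fun j => ‖x j‖)
  rw [EuclideanSpace.norm_sq_eq, mul_pow, EuclideanSpace.norm_sq_eq]
  calc ∑ i, ‖(A *ᵥ ofLp x) i‖ ^ 2 ≤ ∑ _i : n, (ε * ∑ j, ‖x j‖) ^ 2 :=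
        sum_le_sum fun i _ => pow_le_pow_left₀ (norm_nonneg _) (hrow i) 2
    _ = Fintype.card n * ε ^ 2 * (∑ j, ‖x j‖) ^ 2 := by simp only [sum_const, card_univ, nsmul_eq_mul]; ring
    _ ≤ Fintype.card n * ε ^ 2 * (Fintype.card n * ∑ j, ‖x j‖ ^ 2) := by gcongr
    _ = (Fintype.card n * ε) ^ 2 * ∑ j, ‖x j‖ ^ 2 := by ring

end Matrix

theorem stmt_15_general (m n : ℕ) (ε : ℝ) (hε : 0 ≤ ε)
    (U : Matrix (Fin m) (Fin m) ℂ) (hU : U ∈ Matrix.unitaryGroup (Fin m) ℂ)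
    (P : Matrix (Fin m) (Fin m) ℂ)
    (hP : P = Matrix.diagonal (fun i : Fin m => if (i : ℕ) < n then (1 : ℂ) else 0))
    (E : Matrix (Fin m) (Fin m) ℂ)
    (hE : ∀ i j, ‖E i j‖ ≤ ε)
    (R R' : Matrix (Fin m) (Fin m) ℂ)
    (hR : R = U.conjTranspose * P * U) (hR' : R' = R + E)
    (V : Matrix (Fin m) (Fin m) ℂ) (hV : V ∈ Matrix.unitaryGroup (Fin m) ℂ)
    (d : Fin m → ℝ) (hd : ∀ i j : Fin m, i ≤ j → d j ≤ d i)
    (hdiag : V * R' * V.conjTranspose = Matrix.diagonal (fun i => (d i : ℂ))) :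
    ‖Matrix.toEuclideanCLM (𝕜 := ℂ) (Matrix.diagonal (fun i => (d i : ℂ)) - P)‖ +
      ‖Matrix.toEuclideanCLM (𝕜 := ℂ) (V * E * V.conjTranspose)‖ ≤ 2 * (m : ℝ) ^ 3 * ε := by
  set p : Fin m → ℝ := fun i => if (i : ℕ) < n then 1 else 0
  have hp : Antitone p := fun i j (hij : (i : ℕ) ≤ j) => by
    simp only [p]
    split_ifs <;> first | omega | norm_num
  have hPp : P = diagonal (fun i => (p i : ℂ)) := by
    rw [hP]
    congr 1
    funext i
    split_ifs <;> simp [p, *]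
  have hR'V : R' = Vᴴ * diagonal (fun i => (d i : ℂ)) * V := by
    have hVV : Vᴴ * V = 1 := mem_unitaryGroup_iff'.mp hV
    rw [← hdiag, ← mul_assoc, ← mul_assoc, hVV, one_mul, mul_assoc, hVV, mul_one]
  have hEsub : E =
      Vᴴ * diagonal (fun i => (d i : ℂ)) * V - Uᴴ * diagonal (fun i => (p i : ℂ)) * U := by
    rw [← hR'V, ← hPp, ← hR, hR', add_sub_cancel_left]
  have hDP : ‖diagonal (fun i => (d i : ℂ)) - P‖ ≤ ‖E‖ := by
    rw [hPp, diagonal_sub, l2_opNorm_diagonal]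
    refine (pi_norm_le_iff_of_nonneg (norm_nonneg _)).mpr fun i => ?_
    rw [← Complex.ofReal_sub, Complex.norm_real, Real.norm_eq_abs, hEsub]
    exact abs_sub_le_l2_opNorm_sub_of_antitone hd hp hV hU i
  have hVEV : ‖V * E * Vᴴ‖ = ‖E‖ := by
    rw [CStarRing.norm_mul_mem_unitary _ (U := Vᴴ) (Unitary.star_mem hV),
      CStarRing.norm_mem_unitary_mul _ hV]
  have hEm : ‖E‖ ≤ m * ε := by
    simpa using l2_opNorm_le_card_mul_of_norm_apply_le hε hE
  have hm : (m : ℝ) * ε ≤ m ^ 3 * ε := by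
    gcongr
    exact_mod_cast Nat.le_self_pow (by norm_num) m
  change ‖diagonal (fun i => (d i : ℂ)) - P‖ + ‖V * E * Vᴴ‖ ≤ _
  linarith

theorem stmt_15 (m n : ℕ) (hn : n ≤ m) (ε : ℝ) (hε : 0 ≤ ε)
    (hεsmall : ε < 1 / (2 * (m : ℝ) ^ 3))
    (U : Matrix (Fin m) (Fin m) ℂ) (hU : U ∈ Matrix.unitaryGroup (Fin m) ℂ)
    (P : Matrix (Fin m) (Fin m) ℂ)
    (hP : P = Matrix.diagonal (fun i : Fin m => if (i : ℕ) < n then (1 : ℂ) else 0))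
    (E : Matrix (Fin m) (Fin m) ℂ) (hEherm : E.IsHermitian)
    (hE : ∀ i j, ‖E i j‖ ≤ ε)
    (R R' : Matrix (Fin m) (Fin m) ℂ)
    (hR : R = U.conjTranspose * P * U) (hR' : R' = R + E)
    (V : Matrix (Fin m) (Fin m) ℂ) (hV : V ∈ Matrix.unitaryGroup (Fin m) ℂ)
    (d : Fin m → ℝ) (hd : ∀ i j : Fin m, i ≤ j → d j ≤ d i)
    (hdiag : V * R' * V.conjTranspose = Matrix.diagonal (fun i => (d i : ℂ))) :
    ‖Matrix.toEuclideanCLM (𝕜 := ℂ) (Matrix.diagonal (fun i => (d i : ℂ)) - P)‖ +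
      ‖Matrix.toEuclideanCLM (𝕜 := ℂ) (V * E * V.conjTranspose)‖ ≤ 2 * (m : ℝ) ^ 3 * ε :=
  stmt_15_general m n ε hε U hU P hP E hE R R' hR hR' V hV d hd hdiag
end
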